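/- arXiv:2503.16799 — 2 statements merged into one kernel-verified Lean document; each statement's English description precedes it below -/
import Mathlib

section
/- For a fixed target task T = ⟨M, Π, R⟩ with intervened causal diagram G_π and a fixed set of actions X^(j) ⊆ X, the maximal editable set of states with respect to X^(j) is unique: if Δ_1 and Δ_2 are both editable sets w.r.t. X^(j) such that no editable set strictly contains Δ_1 and no editable set strictly contains Δ_2, then Δ_1 = Δ_2. -/
open scoped Classical

/-!
Common scaffold: directed graphs, d-separation, structural causal models,
tasks, policies, source tasks, curricula.
-/

/-- A directed graph, given by its edge relation. -/
structure Dgraph (α : Type) where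
  Edge : α → α → Prop

namespace Dgraph

variable {α β : Type} {H : ℕ}

/-- Two vertices are adjacent if they are joined by an edge in either direction. -/
def Adj (G : Dgraph α) (a b : α) : Prop := G.Edge a b ∨ G.Edge b a

/-- A path in the (skeleton of the) graph: a nonempty list of pairwise distinct
vertices in which consecutive vertices are adjacent. -/
def IsPath (G : Dgraph α) (p : List α) : Prop :=
  p ≠ [] ∧ p.Nodup ∧ p.Chain' G.Adj

/-- `b` is a descendant of `a` (including `a` itself). -/
def Desc (G : Dgraph α) (a b : α) : Prop := Relation.ReflTransGen G.Edge a b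

/-- The set of descendants of `a` (including `a` itself). -/
def DeSet (G : Dgraph α) (a : α) : Set α := {v | G.Desc a v}

/-- `v` is a collider on a path segment `a ~ v ~ b` if both edges point into `v`. -/
def IsCollider (G : Dgraph α) (a v b : α) : Prop := G.Edge a v ∧ G.Edge b v

/-- Pearl's blocking criterion: the path `p` is blocked by the conditioning set `Z`
if some interior vertex is a non-collider belonging to `Z`, or a collider such that
neither it nor any of its descendants belongs to `Z`. -/
def Blocked (G : Dgraph α) (Z : Set α) (p : List α) : Prop :=
  ∃ (i : ℕ) (a v b : α),
    p[i]? = some a ∧ p[i + 1]? = some v ∧ p[i + 2]? = some b ∧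
      ((¬ G.IsCollider a v b ∧ v ∈ Z) ∨
        (G.IsCollider a v b ∧ ∀ w, G.Desc v w → w ∉ Z))

/-- Pearl's d-separation: every path from `A` to `B` is blocked by `Z`. -/
def DSep (G : Dgraph α) (A B Z : Set α) : Prop :=
  ∀ p : List α, G.IsPath p → (∀ a, p.head? = some a → a ∈ A) →
    (∀ b, p.getLast? = some b → b ∈ B) → G.Blocked Z p

/-- Augment `G` with fresh nodes indexed by `β`; the fresh node `i` points into the
old node `y` exactly when `pt i y` holds. -/
def addNodes (G : Dgraph α) (pt : β → α → Prop) : Dgraph (α ⊕ β) where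
  Edge a b :=
    match a, b with
    | Sum.inl x, Sum.inl y => G.Edge x y
    | Sum.inr i, Sum.inl y => pt i y
    | _, _ => False

/-- Augment `G` (the intervened diagram) with one fresh edit-indicator node `τ_v`
pointing into `v`, for each `v ∈ Δ`. -/
def editAug (G : Dgraph α) (Δ : Set α) : Dgraph (α ⊕ α) :=
  G.addNodes fun d a => d ∈ Δ ∧ a = d

/-- Graph-level editability: `Δ` is editable w.r.t. the set of actions `Xj`
(given as indices into `act`) if in the edit-augmented intervened diagram, the edit
indicators are d-separated from `rew ∩ De(act i)` given `{act i} ∪ inp i`,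
for every `i ∈ Xj`. -/
def EditableG (G : Dgraph α) (act : Fin H → α) (inp : Fin H → Set α) (rew : Set α)
    (Xj : Set (Fin H)) (Δ : Set α) : Prop :=
  ∀ i ∈ Xj,
    DSep (editAug G Δ) (Sum.inr '' Δ)
      (Sum.inl '' (rew ∩ DeSet G (act i)))
      (Sum.inl '' insert (act i) (inp i))

/-- Graph-level solubility of an (already intervened) diagram: whenever `j < i`,
a regime node pointing into `act j` is d-separated from `rew ∩ De(act i)` given
`{act i} ∪ inp i`. -/
def SolubleG (G : Dgraph α) (act : Fin H → α) (inp : Fin H → Set α) (rew : Set α) : Prop :=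
  ∀ i j : Fin H, j < i →
    DSep (G.addNodes fun (_ : Unit) a => a = act j) {Sum.inr ()}
      (Sum.inl '' (rew ∩ DeSet G (act i)))
      (Sum.inl '' insert (act i) (inp i))

/-- Edge `k → i` of the relevance graph: a regime node added into `act k` is NOT
d-separated from `rew ∩ De(act i)` given `{act i} ∪ inp i`. -/
def RelEdge (G : Dgraph α) (act : Fin H → α) (inp : Fin H → Set α) (rew : Set α)
    (k i : Fin H) : Prop :=
  ¬ DSep (G.addNodes fun (_ : Unit) a => a = act k) {Sum.inr ()}
      (Sum.inl '' (rew ∩ DeSet G (act i)))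
      (Sum.inl '' insert (act i) (inp i))

/-- `k` and `i` lie in the same maximal strongly connected component of the
relevance graph. -/
def SameSCC (G : Dgraph α) (act : Fin H → α) (inp : Fin H → Set α) (rew : Set α)
    (k i : Fin H) : Prop :=
  Relation.ReflTransGen (RelEdge G act inp rew) k i ∧
    Relation.ReflTransGen (RelEdge G act inp rew) i k

end Dgraph

/-- The "frame" of a decision-making task: the causal signature (variables, their
finite domains, exogenous variables, diagram) together with actions `act i`,
their input states `inp i`, reward signals `rew`, and reward function `R`.
Source tasks of a target task share the same frame. -/
structure TaskFrame (V : Type) [Fintype V] [DecidableEq V] (H : ℕ) where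
  /-- index of exogenous variables -/
  W : Type
  [fintypeW : Fintype W]
  [decEqW : DecidableEq W]
  /-- domains of endogenous variables -/
  dom : V → Type
  [fintypeDom : ∀ v, Fintype (dom v)]
  [decEqDom : ∀ v, DecidableEq (dom v)]
  [nonemptyDom : ∀ v, Nonempty (dom v)]
  /-- domains of exogenous variables -/
  domU : W → Type
  [fintypeDomU : ∀ w, Fintype (domU w)]
  [nonemptyDomU : ∀ w, Nonempty (domU w)]
  /-- endogenous parent relation of the causal diagram: `pa u v` iff `u → v` -/
  pa : V → V → Prop
  /-- `uArgs v w` iff exogenous variable `w` is an argument of `f_v`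
  (shared exogenous arguments yield bidirected edges) -/
  uArgs : V → W → Prop
  /-- the causal diagram is acyclic -/
  acyclic : ∀ v, ¬ Relation.TransGen pa v v
  /-- the actions X_1, …, X_H -/
  act : Fin H → V
  act_inj : Function.Injective act
  /-- the input states S_i of each action -/
  inp : Fin H → Set V
  /-- the reward signals Y -/
  rew : Set V
  /-- the reward function R(Y) -/
  R : (∀ v, dom v) → ℝ
  R_local : ∀ val val' : ∀ v, dom v, (∀ v ∈ rew, val v = val' v) → R val = R val'
  /-- each action is a non-descendant of future actions -/
  act_nd : ∀ i k : Fin H, i < k → ¬ Relation.ReflTransGen pa (act k) (act i)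
  /-- input states are non-descendants of present and future actions -/
  inp_nd : ∀ i k : Fin H, i ≤ k → ∀ v ∈ inp i, ¬ Relation.ReflTransGen pa (act k) v

attribute [instance] TaskFrame.fintypeW TaskFrame.decEqW TaskFrame.fintypeDom
  TaskFrame.decEqDom TaskFrame.nonemptyDom TaskFrame.fintypeDomU TaskFrame.nonemptyDomU

namespace TaskFrame

variable {V : Type} [Fintype V] [DecidableEq V] {H : ℕ}

/-- `v` is one of the actions. -/
def isAct (F : TaskFrame V H) (v : V) : Prop := ∃ i, F.act i = v

/-- The intervened causal diagram `G_π` over endogenous and exogenous variables: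
incoming arrows of each action are replaced by arrows from its input states. -/
def Gpi (F : TaskFrame V H) : Dgraph (V ⊕ F.W) where
  Edge a b :=
    match a, b with
    | Sum.inl u, Sum.inl v =>
        (¬ F.isAct v ∧ F.pa u v) ∨ (∃ i, F.act i = v ∧ u ∈ F.inp i)
    | Sum.inr w, Sum.inl v => ¬ F.isAct v ∧ F.uArgs v w
    | _, _ => False

/-- The endogenous descendants of action `act i` in `G_π` (including itself). -/
def DeAct (F : TaskFrame V H) (i : Fin H) : Set V :=
  {v | (F.Gpi).Desc (Sum.inl (F.act i)) (Sum.inl v)}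

/-- Embedding of endogenous variables into the edit-augmented diagram. -/
def endo (F : TaskFrame V H) : V → (V ⊕ F.W) ⊕ V := fun v => Sum.inl (Sum.inl v)

/-- Embedding of endogenous variables into a regime-augmented diagram. -/
def endo1 (F : TaskFrame V H) : V → (V ⊕ F.W) ⊕ Unit := fun v => Sum.inl (Sum.inl v)

end TaskFrame

/-- The mechanisms of an SCM over a given frame: structural functions (with their
exogenous arguments) and the distributions of the (mutually independent)
exogenous variables. -/
structure Mech {V : Type} [Fintype V] [DecidableEq V] {H : ℕ} (F : TaskFrame V H) where
  /-- structural functions -/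
  f : ∀ v, (∀ u, F.dom u) → (∀ w, F.domU w) → F.dom v
  /-- `f v` depends only on the parents and exogenous arguments of `v` -/
  f_local : ∀ v (val val' : ∀ u, F.dom u) (exo exo' : ∀ w, F.domU w),
    (∀ u, F.pa u v → val u = val' u) → (∀ w, F.uArgs v w → exo w = exo' w) →
    f v val exo = f v val' exo'
  /-- distributions of the exogenous variables -/
  PU : ∀ w, F.domU w → ℝ
  PU_nonneg : ∀ w x, 0 ≤ PU w x
  PU_sum : ∀ w, ∑ x, PU w x = 1

/-- A policy from the policy space `Π`: a stochastic decision rule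
`pk i (s) (x) = π_i(X_i = x | S_i = s)` for each action, depending only on the
input states `inp i`. -/
structure Policy {V : Type} [Fintype V] [DecidableEq V] {H : ℕ} (F : TaskFrame V H) where
  pk : ∀ i : Fin H, (∀ v, F.dom v) → F.dom (F.act i) → ℝ
  pk_nonneg : ∀ i val x, 0 ≤ pk i val x
  pk_sum : ∀ i val, ∑ x, pk i val x = 1
  pk_local : ∀ i (val val' : ∀ v, F.dom v),
    (∀ v ∈ F.inp i, val v = val' v) → pk i val = pk i val'

section Semantics

variable {V : Type} [Fintype V] [DecidableEq V] {H : ℕ}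

/-- Interventional joint probability mass `P(V = val ; do(π))` in the submodel
`M_π`: exogenous variables are drawn independently, actions follow the policy,
and every non-action variable must equal the value of its structural function. -/
noncomputable def jointP (F : TaskFrame V H) (M : Mech F) (π : Policy F)
    (val : ∀ v, F.dom v) : ℝ :=
  ∑ exo : ∀ w, F.domU w,
    (∏ w, M.PU w (exo w)) *
      ((∏ i : Fin H, π.pk i val (val (F.act i))) *
        ∏ v, if F.isAct v then (1 : ℝ) else if val v = M.f v val exo then 1 else 0)

/-- The probability that the variables in `S` agree with the assignment `s`,
under `do(π)`. -/
noncomputable def probAgree (F : TaskFrame V H) (M : Mech F) (π : Policy F)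
    (S : Set V) (s : ∀ v, F.dom v) : ℝ :=
  ∑ val : ∀ v, F.dom v, if ∀ v ∈ S, val v = s v then jointP F M π val else 0

/-- `s` (restricted to `S`) is reachable under `do(π)` : it has positive
probability. -/
def Reachable (F : TaskFrame V H) (M : Mech F) (π : Policy F)
    (S : Set V) (s : ∀ v, F.dom v) : Prop :=
  0 < probAgree F M π S s

/-- Expected reward `E[R(Y); do(π)]`. -/
noncomputable def EReward (F : TaskFrame V H) (M : Mech F) (π : Policy F) : ℝ :=
  ∑ val : ∀ v, F.dom v, jointP F M π val * F.R val

/-- `π` is an optimal policy for the task with mechanisms `M`. -/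
def OptimalPolicy (F : TaskFrame V H) (M : Mech F) (π : Policy F) : Prop :=
  ∀ π' : Policy F, EReward F M π' ≤ EReward F M π

/-- `M'` is obtained from `M` by editing only the variables of `Δ`: structural
functions and exogenous distributions outside `Δ` are unchanged. -/
def IsEditOf (F : TaskFrame V H) (M M' : Mech F) (Δ : Set V) : Prop :=
  (∀ v, v ∉ Δ → M'.f v = M.f v) ∧
    (∀ w, (∀ v, F.uArgs v w → v ∉ Δ) → M'.PU w = M.PU w)

/-- Task-level editability of a set of states `Δ` w.r.t. a set of actions `Xj`:
in the edit-augmented intervened diagram, the edit indicators `τ` are d-separated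
from `Y ∩ De(X_i)` given `{X_i} ∪ S_i`, for every `i ∈ Xj`. -/
def Editable (F : TaskFrame V H) (Xj : Set (Fin H)) (Δ : Set V) : Prop :=
  ∀ i ∈ Xj,
    Dgraph.DSep ((F.Gpi).addNodes fun (d : V) a => d ∈ Δ ∧ a = Sum.inl d)
      (Sum.inr '' Δ)
      (F.endo '' (F.rew ∩ F.DeAct i))
      (F.endo '' insert (F.act i) (F.inp i))

/-- Task-level solubility: whenever `j < i`, a regime node pointing into `act j`
is d-separated from `Y ∩ De(X_i)` given `{X_i} ∪ S_i` in `G_π`. -/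
def Soluble (F : TaskFrame V H) : Prop :=
  ∀ i j : Fin H, j < i →
    Dgraph.DSep ((F.Gpi).addNodes fun (_ : Unit) a => a = Sum.inl (F.act j))
      {Sum.inr ()}
      (F.endo1 '' (F.rew ∩ F.DeAct i))
      (F.endo1 '' insert (F.act i) (F.inp i))

/-- The set of actions on which a source-task policy `πs` (for mechanisms `Ms`)
and a target-task policy `πt` (for mechanisms `Mt`) share their decision rules
on the shared reachable inputs: `π^{(j)} ∩ π^*`. -/
def SharedRules (F : TaskFrame V H) (Mt Ms : Mech F) (πt πs : Policy F) :
    Set (Fin H) :=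
  {i | ∀ s : ∀ v, F.dom v,
    Reachable F Ms πs (F.inp i) s → Reachable F Mt πt (F.inp i) s →
      ∀ x, πs.pk i s x = πt.pk i s x}

/-- The maximal editable set w.r.t. `Xj` (the output of FindMaxEdit): all
non-action, non-reward variables whose singleton is editable. -/
def MaxEdit (F : TaskFrame V H) (Xj : Set (Fin H)) : Set V :=
  {v | ¬ F.isAct v ∧ v ∉ F.rew ∧ Editable F Xj {v}}

/-- Edge `k → i` of the relevance graph of the task. -/
def RelEdgeT (F : TaskFrame V H) (k i : Fin H) : Prop :=
  ¬ Dgraph.DSep ((F.Gpi).addNodes fun (_ : Unit) a => a = Sum.inl (F.act k))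
      {Sum.inr ()}
      (F.endo1 '' (F.rew ∩ F.DeAct i))
      (F.endo1 '' insert (F.act i) (F.inp i))

/-- `k` and `i` lie in the same maximal strongly connected component of the
relevance graph. -/
def SameSCCT (F : TaskFrame V H) (k i : Fin H) : Prop :=
  Relation.ReflTransGen (RelEdgeT F) k i ∧ Relation.ReflTransGen (RelEdgeT F) i k

/-- The strongly connected component `[X_i]` of action `i` (as a set of action
indices). -/
def compT (F : TaskFrame V H) (i : Fin H) : Set (Fin H) :=
  {k | SameSCCT F k i}

/-- The component of `k` strictly precedes the component of `i` in the
topological order over the strongly connected components of the relevance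
graph. -/
def PrecT (F : TaskFrame V H) (k i : Fin H) : Prop :=
  Relation.TransGen (RelEdgeT F) k i ∧ ¬ SameSCCT F k i

/-- The inputs `S_{[X_i]}` of the component of `i`. -/
def SbigT (F : TaskFrame V H) (i : Fin H) : Set V :=
  {v | ∃ k, SameSCCT F k i ∧ v ∈ F.inp k}

/-- The action variables of the component `[X_i]`. -/
def actSetT (F : TaskFrame V H) (i : Fin H) : Set V :=
  {v | ∃ k, SameSCCT F k i ∧ F.act k = v}

/-- The reward signals `Y_{[X_i]} = De([X_i]) ∩ Y` of the component of `i`. -/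
def YdeT (F : TaskFrame V H) (i : Fin H) : Set V :=
  F.rew ∩ {v | ∃ k, SameSCCT F k i ∧ v ∈ F.DeAct k}

/-- Conditional expectation `E[g | S = s ; do(π)]`. -/
noncomputable def condER (F : TaskFrame V H) (M : Mech F) (π : Policy F)
    (S : Set V) (s : ∀ v, F.dom v) (g : (∀ v, F.dom v) → ℝ) : ℝ :=
  (∑ val : ∀ v, F.dom v,
      if ∀ v ∈ S, val v = s v then jointP F M π val * g val else 0) /
    probAgree F M π S s

/-- Conditional probability `P(A-variables = t on A | B-variables = t on B ; do(π))`. -/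
noncomputable def condP (F : TaskFrame V H) (M : Mech F) (π : Policy F)
    (A B : Set V) (t : ∀ v, F.dom v) : ℝ :=
  (∑ val : ∀ v, F.dom v,
      if ∀ v ∈ A ∪ B, val v = t v then jointP F M π val else 0) /
    (∑ val : ∀ v, F.dom v, if ∀ v ∈ B, val v = t v then jointP F M π val else 0)

/-- Combine two policies: use the decision rules of `π` on the actions in `K`
and those of `π'` elsewhere. -/
noncomputable def combinePolicy (F : TaskFrame V H) (K : Set (Fin H))
    (π π' : Policy F) : Policy F where
  pk i := if i ∈ K then π.pk i else π'.pk i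
  pk_nonneg := by
    intro i val x
    by_cases h : i ∈ K
    · simpa [h] using π.pk_nonneg i val x
    · simpa [h] using π'.pk_nonneg i val x
  pk_sum := by
    intro i val
    by_cases h : i ∈ K
    · simpa [h] using π.pk_sum i val
    · simpa [h] using π'.pk_sum i val
  pk_local := by
    intro i val val' hag
    by_cases h : i ∈ K
    · simpa [h] using π.pk_local i val val' hag
    · simpa [h] using π'.pk_local i val val' hag

end Semantics


namespace Dgraph

section Aux

variable {α : Type}

lemma editAug_adj_inr' {G : Dgraph α} {Δ : Set α} {u : α ⊕ α} {x : α}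
    (h : (G.editAug Δ).Adj u (Sum.inr x)) : u = Sum.inl x := by
  rcases h with h | h
  · cases u <;> simp [editAug, addNodes] at h
  · cases u with
    | inl y =>
      simp only [editAug, addNodes] at h
      exact congrArg Sum.inl h.2
    | inr y => simp [editAug, addNodes] at h

lemma addNodes_desc_inl {β : Type} (G : Dgraph α) (pt : β → α → Prop) {x : α} {w : α ⊕ β} :
    (G.addNodes pt).Desc (Sum.inl x) w ↔ ∃ y, w = Sum.inl y ∧ G.Desc x y := by
  constructor
  · intro h
    induction h with
    | refl => exact ⟨x, rfl, Relation.ReflTransGen.refl⟩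
    | @tail b c _ e ih =>
      obtain ⟨y, rfl, hy⟩ := ih
      cases c with
      | inl z =>
        refine ⟨z, rfl, hy.tail ?_⟩
        simpa [addNodes] using e
      | inr i => simp [addNodes] at e
  · rintro ⟨y, rfl, hy⟩
    induction hy with
    | refl => exact Relation.ReflTransGen.refl
    | @tail b c _ e ih =>
      refine ih.tail ?_
      show (G.addNodes pt).Edge (Sum.inl b) (Sum.inl c)
      simpa [addNodes] using e

lemma editAug_desc_inl (G : Dgraph α) (Δ : Set α) {y : α} {w : α ⊕ α} :
    (G.editAug Δ).Desc (Sum.inl y) w ↔ ∃ z, w = Sum.inl z ∧ G.Desc y z :=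
  addNodes_desc_inl G _

lemma blocked_of_subset (G : Dgraph α) {Δ₁ Δ : Set α} (hsub : Δ₁ ⊆ Δ) (B₀ Z₀ : Set α)
    (hds : (G.editAug Δ₁).DSep (Sum.inr '' Δ₁) (Sum.inl '' B₀) (Sum.inl '' Z₀))
    (p : List (α ⊕ α)) (hp : (G.editAug Δ).IsPath p)
    {d : α} (hd : d ∈ Δ₁) (hhead : p.head? = some (Sum.inr d))
    (hlast : ∀ b, p.getLast? = some b → b ∈ Sum.inl '' B₀) :
    (G.editAug Δ).Blocked (Sum.inl '' Z₀) p := by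
  obtain ⟨hne, hnd, hch⟩ := hp
  -- edit-indicator nodes can only appear at the head of the path
  have hinr : ∀ k x, p[k]? = some (Sum.inr x) → k = 0 ∧ x = d := by
    intro k x hk
    have hklen : k < p.length := (List.getElem?_eq_some_iff.mp hk).1
    rcases Nat.eq_zero_or_pos k with rfl | hkpos
    · refine ⟨rfl, ?_⟩
      rw [← List.head?_eq_getElem?, hhead] at hk
      exact (Sum.inr.inj (Option.some.inj hk)).symm
    · exfalso
      obtain ⟨m, rfl⟩ : ∃ m, k = m + 1 := ⟨k - 1, (Nat.succ_pred_eq_of_pos hkpos).symm⟩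
      have hchain := List.isChain_iff_getElem.mp hch
      obtain ⟨hlt, hget⟩ := List.getElem?_eq_some_iff.mp hk
      have hm : m + 1 < p.length := by omega
      have hadj1 := hchain m hm
      rw [hget] at hadj1
      have hpm : p[m] = Sum.inl x := editAug_adj_inr' hadj1
      rcases lt_or_eq_of_le (show m + 2 ≤ p.length by omega) with h2 | h2
      · have hadj2 := hchain (m + 1) (by omega)
        rw [hget] at hadj2
        have hpm2 : p[m + 1 + 1] = Sum.inl x :=
          editAug_adj_inr' (Or.symm hadj2)
        have : m = m + 2 := by
          apply (List.getElem?_inj (by omega : m < p.length) hnd).mp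
          rw [List.getElem?_eq_getElem (by omega : m < p.length),
            List.getElem?_eq_getElem (by omega : m + 2 < p.length)]
          rw [hpm]
          exact congrArg some hpm2.symm
        omega
      · have hlast' : p.getLast? = some (Sum.inr x) := by
          rw [List.getLast?_eq_getElem?, show p.length - 1 = m + 1 by omega]
          exact hk
        obtain ⟨y, _, hy⟩ := hlast (Sum.inr x) hlast'
        exact Sum.inl_ne_inr hy
  have hmem : ∀ x : α, Sum.inr x ∈ p → x = d := by
    intro x hx
    obtain ⟨k, hk⟩ := List.mem_iff_getElem?.mp hx
    exact (hinr k x hk).2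
  -- edges agree on vertices of p between the two augmented graphs
  have hedge : ∀ u ∈ p, ∀ v ∈ p,
      ((G.editAug Δ).Edge u v ↔ (G.editAug Δ₁).Edge u v) := by
    intro u hu v hv
    cases u with
    | inl a =>
      cases v with
      | inl b => exact Iff.rfl
      | inr x => simp [editAug, addNodes]
    | inr x =>
      cases v with
      | inl b =>
        have hxd : x = d := hmem x hu
        subst hxd
        show (x ∈ Δ ∧ b = x) ↔ (x ∈ Δ₁ ∧ b = x)
        simp [hd, hsub hd]
      | inr y => simp [editAug, addNodes]
  have hch1 : p.Chain' (G.editAug Δ₁).Adj := by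
    have hch := List.isChain_iff_getElem.mp hch
    refine List.isChain_iff_getElem.mpr ?_
    intro i h
    have hadj := hch i h
    have hu := List.getElem_mem (by omega : i < p.length)
    have hv := List.getElem_mem h
    rcases hadj with h' | h'
    · exact Or.inl ((hedge _ hu _ hv).mp h')
    · exact Or.inr ((hedge _ hv _ hu).mp h')
  have hblocked : (G.editAug Δ₁).Blocked (Sum.inl '' Z₀) p := by
    refine hds p ⟨hne, hnd, hch1⟩ ?_ hlast
    intro a ha
    rw [hhead] at ha
    cases ha
    exact ⟨d, hd, rfl⟩
  obtain ⟨i, a, v, b, ha, hv, hb, hcase⟩ := hblocked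
  obtain ⟨y, rfl⟩ : ∃ y, v = Sum.inl y := by
    cases v with
    | inl y => exact ⟨y, rfl⟩
    | inr x => exact absurd (hinr _ _ hv).1 (by omega)
  have hamem := List.mem_of_getElem? ha
  have hvmem := List.mem_of_getElem? hv
  have hbmem := List.mem_of_getElem? hb
  refine ⟨i, a, Sum.inl y, b, ha, hv, hb, ?_⟩
  have hcoll : (G.editAug Δ).IsCollider a (Sum.inl y) b ↔
      (G.editAug Δ₁).IsCollider a (Sum.inl y) b :=
    and_congr (hedge _ hamem _ hvmem) (hedge _ hbmem _ hvmem)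
  rcases hcase with ⟨hnc, hz⟩ | ⟨hc, hdesc⟩
  · exact Or.inl ⟨fun h => hnc (hcoll.mp h), hz⟩
  · refine Or.inr ⟨hcoll.mpr hc, ?_⟩
    intro w hw
    exact hdesc w ((editAug_desc_inl G Δ₁).mpr ((editAug_desc_inl G Δ).mp hw))

lemma editableG_union {H : ℕ} (G : Dgraph α) (act : Fin H → α) (inp : Fin H → Set α)
    (rew : Set α) (Xj : Set (Fin H)) {Δ₁ Δ₂ : Set α}
    (h₁ : G.EditableG act inp rew Xj Δ₁) (h₂ : G.EditableG act inp rew Xj Δ₂) :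
    G.EditableG act inp rew Xj (Δ₁ ∪ Δ₂) := by
  intro i hi p hp hA hB
  obtain ⟨a, ha⟩ : ∃ a, p.head? = some a := by
    cases p with
    | nil => exact absurd rfl hp.1
    | cons x q => exact ⟨x, rfl⟩
  obtain ⟨dd, hdd, rfl⟩ := hA a ha
  rcases hdd with hdd | hdd
  · exact blocked_of_subset G Set.subset_union_left _ _ (h₁ i hi) p hp hdd ha hB
  · exact blocked_of_subset G Set.subset_union_right _ _ (h₂ i hi) p hp hdd ha hB

end Aux

end Dgraph

/-- **Uniqueness of the maximal editable set.**
For a fixed (intervened) causal diagram `G` with actions `act`, inputs `inp`,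
rewards `rew`, and a fixed action set `Xj`, any two maximal editable sets w.r.t.
`Xj` coincide. -/
theorem maximal_editable_set_unique
    {α : Type} [Fintype α] {H : ℕ} (G : Dgraph α)
    (hacyc : ∀ a, ¬ Relation.TransGen G.Edge a a)
    (act : Fin H → α) (hinj : Function.Injective act)
    (inp : Fin H → Set α) (rew : Set α) (Xj : Set (Fin H))
    (Δ₁ Δ₂ : Set α)
    (h₁X : ∀ i ∈ Xj, act i ∉ Δ₁) (h₂X : ∀ i ∈ Xj, act i ∉ Δ₂)
    (h₁ : Dgraph.EditableG G act inp rew Xj Δ₁)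
    (h₂ : Dgraph.EditableG G act inp rew Xj Δ₂)
    (hmax₁ : ∀ Δ : Set α, (∀ i ∈ Xj, act i ∉ Δ) →
      Dgraph.EditableG G act inp rew Xj Δ → ¬ Δ₁ ⊂ Δ)
    (hmax₂ : ∀ Δ : Set α, (∀ i ∈ Xj, act i ∉ Δ) →
      Dgraph.EditableG G act inp rew Xj Δ → ¬ Δ₂ ⊂ Δ) :
    Δ₁ = Δ₂ := by
  have hX : ∀ i ∈ Xj, act i ∉ Δ₁ ∪ Δ₂ := by
    intro i hi h
    rcases h with h | h
    · exact h₁X i hi h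
    · exact h₂X i hi h
  have hU := Dgraph.editableG_union G act inp rew Xj h₁ h₂
  have e1 : Δ₁ = Δ₁ ∪ Δ₂ := by
    by_contra hne
    exact hmax₁ _ hX hU (Set.subset_union_left.ssubset_of_ne hne)
  have e2 : Δ₂ = Δ₁ ∪ Δ₂ := by
    by_contra hne
    exact hmax₂ _ hX hU (Set.subset_union_right.ssubset_of_ne hne)
  exact e1.trans e2.symm
end

section
/- For a target task T with intervened causal diagram G_π and a set of actions X^(j) ⊆ X, the set Δ* = {V ∈ V \ (X ∪ Y) : the singleton {V} is editable w.r.t. X^(j)} is itself editable w.r.t. X^(j), it is the unique maximal editable set w.r.t. X^(j) (i.e., the output of the FindMaxEdit procedure, regardless of the order in which variables are examined), and a set Δ ⊆ V \ (X ∪ Y) is editable w.r.t. X^(j) if and only if Δ ⊆ Δ*. -/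
open scoped Classical

/-- The set of all non-action, non-reward variables whose singleton is editable
w.r.t. `Xj` (the output of the FindMaxEdit procedure, independent of the order
in which variables are examined). -/
def maxEditG {α : Type} {H : ℕ} (G : Dgraph α) (act : Fin H → α)
    (inp : Fin H → Set α) (rew : Set α) (Xj : Set (Fin H)) : Set α :=
  {v | v ∉ Set.range act ∧ v ∉ rew ∧ Dgraph.EditableG G act inp rew Xj {v}}

section FindMaxEditAux

variable {α : Type}

open Dgraph

private lemma chain'_pred {γ : Type} {R : γ → γ → Prop} :
    ∀ {l : List γ} {a x : γ}, List.Chain' R (a :: l) → x ∈ l → ∃ y, R y x := by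
  intro l
  induction l with
  | nil => intro a x _ hx; simp at hx
  | cons b t ih =>
    intro a x hc hx
    rcases List.mem_cons.mp hx with rfl | hx
    · exact ⟨a, (List.isChain_cons_cons.mp hc).1⟩
    · exact ih (List.isChain_cons_cons.mp hc).2 hx

private lemma chain'_mem_imp {γ : Type} {R R' : γ → γ → Prop} :
    ∀ {l : List γ}, (∀ x ∈ l, ∀ y ∈ l, R x y → R' x y) → List.Chain' R l →
      List.Chain' R' l := by
  intro l
  induction l with
  | nil => intro _ _; exact List.isChain_nil
  | cons a t ih =>
    intro h hc
    cases t with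
    | nil => exact List.isChain_singleton _
    | cons b t' =>
      simp only [List.Chain', List.isChain_cons_cons] at hc ⊢
      refine ⟨h a (by simp) b (by simp) hc.1, ih ?_ hc.2⟩
      intro x hx y hy
      exact h x (by simp [hx]) y (by simp [hy])

private lemma editAug_edge_inl_inl {G : Dgraph α} {S : Set α} {a b : α} :
    (G.editAug S).Edge (Sum.inl a) (Sum.inl b) ↔ G.Edge a b := Iff.rfl

private lemma editAug_edge_inr_inl {G : Dgraph α} {S : Set α} {d b : α} :
    (G.editAug S).Edge (Sum.inr d) (Sum.inl b) ↔ d ∈ S ∧ b = d := Iff.rfl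

private lemma editAug_edge_to_inr {G : Dgraph α} {S : Set α} {x : α ⊕ α} {d : α} :
    ¬ (G.editAug S).Edge x (Sum.inr d) := by
  cases x <;> exact fun h => h

private lemma editAug_edge_inr {G : Dgraph α} {S : Set α} {d : α} {y : α ⊕ α}
    (h : (G.editAug S).Edge (Sum.inr d) y) : d ∈ S ∧ y = Sum.inl d := by
  cases y with
  | inl b => exact ⟨h.1, by rw [h.2]⟩
  | inr b => exact absurd h (fun h => h)

private lemma edge_iff {G : Dgraph α} {S S' : Set α} {v : α}
    (hv : v ∈ S) (hv' : v ∈ S') {x y : α ⊕ α}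
    (hx : ∀ d, x = Sum.inr d → d = v) :
    (G.editAug S).Edge x y ↔ (G.editAug S').Edge x y := by
  cases x with
  | inl a =>
    cases y with
    | inl b => exact Iff.rfl
    | inr b => exact Iff.rfl
  | inr d =>
    have hd : d = v := hx d rfl
    subst hd
    cases y with
    | inl b =>
      rw [editAug_edge_inr_inl, editAug_edge_inr_inl]
      exact ⟨fun h => ⟨hv', h.2⟩, fun h => ⟨hv, h.2⟩⟩
    | inr b => exact Iff.rfl

private lemma desc_inl {G : Dgraph α} {S : Set α} {x : α} {w : α ⊕ α} :
    (G.editAug S).Desc (Sum.inl x) w ↔ ∃ y, w = Sum.inl y ∧ G.Desc x y := by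
  constructor
  · intro h
    induction h with
    | refl => exact ⟨x, rfl, Relation.ReflTransGen.refl⟩
    | @tail b c hbc he ih =>
      obtain ⟨y, hb, hy⟩ := ih
      subst hb
      cases c with
      | inl z => exact ⟨z, rfl, hy.tail he⟩
      | inr z => exact absurd he editAug_edge_to_inr
  · rintro ⟨y, rfl, hy⟩
    induction hy with
    | refl => exact Relation.ReflTransGen.refl
    | tail _ he ih => exact ih.tail he

private lemma desc_inr {G : Dgraph α} {S : Set α} {v : α} (hv : v ∈ S) {w : α ⊕ α} :
    (G.editAug S).Desc (Sum.inr v) w ↔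
      w = Sum.inr v ∨ ∃ y, w = Sum.inl y ∧ G.Desc v y := by
  constructor
  · intro h
    rcases h.cases_head with heq | ⟨c, he, hc⟩
    · exact Or.inl heq.symm
    · obtain ⟨_, rfl⟩ := editAug_edge_inr he
      exact Or.inr (desc_inl.mp hc)
  · rintro (rfl | ⟨y, rfl, hy⟩)
    · exact Relation.ReflTransGen.refl
    · exact Relation.ReflTransGen.head
        (editAug_edge_inr_inl.mpr ⟨hv, rfl⟩) (desc_inl.mpr ⟨y, rfl, hy⟩)

private lemma desc_iff {G : Dgraph α} {S S' : Set α} {v : α}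
    (hv : v ∈ S) (hv' : v ∈ S') {x w : α ⊕ α}
    (hx : ∀ d, x = Sum.inr d → d = v) :
    (G.editAug S).Desc x w ↔ (G.editAug S').Desc x w := by
  cases x with
  | inl a => rw [desc_inl, desc_inl]
  | inr d =>
    have hd : d = v := hx d rfl
    subst hd
    rw [desc_inr hv, desc_inr hv']

private lemma collider_iff {G : Dgraph α} {S S' : Set α} {v : α}
    (hv : v ∈ S) (hv' : v ∈ S') {a w b : α ⊕ α}
    (ha : ∀ d, a = Sum.inr d → d = v) (hb : ∀ d, b = Sum.inr d → d = v) :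
    (G.editAug S).IsCollider a w b ↔ (G.editAug S').IsCollider a w b := by
  unfold Dgraph.IsCollider
  rw [edge_iff hv hv' ha, edge_iff hv hv' hb]

/-- every vertex appearing on a path with only `inr v`-style `inr` endpoints -/
private lemma blocked_transfer {G : Dgraph α} {S S' : Set α} {v : α}
    (hv : v ∈ S) (hv' : v ∈ S') {W : Set (α ⊕ α)} {p : List (α ⊕ α)}
    (hOk : ∀ x ∈ p, ∀ d, x = Sum.inr d → d = v) :
    (G.editAug S).Blocked W p → (G.editAug S').Blocked W p := by
  rintro ⟨i, a, w, b, hga, hgw, hgb, hcase⟩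
  have hma : a ∈ p := List.mem_of_getElem? hga
  have hmw : w ∈ p := List.mem_of_getElem? hgw
  have hmb : b ∈ p := List.mem_of_getElem? hgb
  refine ⟨i, a, w, b, hga, hgw, hgb, ?_⟩
  rcases hcase with ⟨hnc, hwW⟩ | ⟨hc, hdesc⟩
  · exact Or.inl ⟨fun h =>
      hnc ((collider_iff hv hv' (hOk a hma) (hOk b hmb)).mpr h), hwW⟩
  · refine Or.inr ⟨(collider_iff hv hv' (hOk a hma) (hOk b hmb)).mp hc, ?_⟩
    intro u hu
    exact hdesc u ((desc_iff hv hv' (hOk w hmw)).mpr hu)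

private lemma adj_ok {G : Dgraph α} {S : Set α} {x y : α ⊕ α} {d : α}
    (h : (G.editAug S).Adj x y) (hx : x = Sum.inr d) : d ∈ S ∧ y = Sum.inl d := by
  subst hx
  rcases h with h | h
  · exact editAug_edge_inr h
  · exact absurd h editAug_edge_to_inr

/-- In the singleton-augmented graph, any `inr` vertex of a path whose head is
constrained must be `inr v`. -/
private lemma ok_of_singleton_path {G : Dgraph α} {v : α} {p : List (α ⊕ α)}
    (hc : List.Chain' (G.editAug {v}).Adj p)
    (hh : ∀ d, p.head? = some (Sum.inr d) → d = v) :
    ∀ x ∈ p, ∀ d, x = Sum.inr d → d = v := by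
  cases p with
  | nil => intro x hx; simp at hx
  | cons a t =>
    intro x hx d hxd
    rcases List.mem_cons.mp hx with rfl | hx
    · exact hh d (by rw [hxd]; rfl)
    · obtain ⟨y, hy⟩ := chain'_pred hc hx
      rcases hy with hy | hy
      · subst hxd; exact absurd hy editAug_edge_to_inr
      · subst hxd
        exact (editAug_edge_inr hy).1

/-- In any edit-augmented graph, non-head vertices of a nodup path ending at an
`inl` vertex are never `inr`. -/
private lemma tail_not_inr {G : Dgraph α} {S : Set α} :
    ∀ (p : List (α ⊕ α)), List.Chain' (G.editAug S).Adj p → p.Nodup →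
      (∀ d : α, p.getLast? ≠ some (Sum.inr d)) →
      ∀ x ∈ p.tail, ∀ d : α, x ≠ Sum.inr d := by
  intro p
  induction p with
  | nil => intro _ _ _ x hx; simp at hx
  | cons a rest ih =>
    intro hc hnd hlast x hx d hxd
    cases rest with
    | nil => simp at hx
    | cons b t =>
      simp only [List.tail_cons] at hx
      rcases List.mem_cons.mp hx with rfl | hx
      · -- x = b = inr d
        subst hxd
        have hab : (G.editAug S).Adj a (Sum.inr d) := (List.isChain_cons_cons.mp hc).1
        have ha : a = Sum.inl d := by
          rcases hab with h | h
          · exact absurd h editAug_edge_to_inr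
          · exact (editAug_edge_inr h).2
        cases t with
        | nil => exact hlast d (by simp)
        | cons c t' =>
          have hbc : (G.editAug S).Adj (Sum.inr d) c :=
            (List.isChain_cons_cons.mp (List.isChain_cons_cons.mp hc).2).1
          have hcc : c = Sum.inl d := by
            rcases hbc with h | h
            · exact (editAug_edge_inr h).2
            · exact absurd h editAug_edge_to_inr
          have : a ∉ (Sum.inr d : α ⊕ α) :: c :: t' := (List.nodup_cons.mp hnd).1
          exact this (by rw [ha, ← hcc]; simp)
      · -- x in deeper tail: use ih on rest = b :: t
        refine ih (List.isChain_cons_cons.mp hc).2 (List.nodup_cons.mp hnd).2 ?_ x hx d hxd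
        intro e he
        exact hlast e (by rw [← he]; exact (List.getLast?_cons_cons ..))

private lemma path_transfer {G : Dgraph α} {S S' : Set α} {v : α}
    (hv : v ∈ S) (hv' : v ∈ S') {p : List (α ⊕ α)}
    (hOk : ∀ x ∈ p, ∀ d, x = Sum.inr d → d = v)
    (hp : (G.editAug S).IsPath p) : (G.editAug S').IsPath p := by
  obtain ⟨hne, hnd, hc⟩ := hp
  refine ⟨hne, hnd, chain'_mem_imp ?_ hc⟩
  intro x hx y hy hxy
  rcases hxy with h | h
  · exact Or.inl ((edge_iff hv hv' (hOk x hx)).mp h)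
  · exact Or.inr ((edge_iff hv hv' (hOk y hy)).mp h)

/-- Key equivalence: d-separation of the indicators from `inl` sets holds for `Δ`
iff it holds for every singleton of `Δ`. -/
private lemma dsep_iff_singletons (G : Dgraph α) (Δ : Set α) (B W : Set α) :
    Dgraph.DSep (G.editAug Δ) (Sum.inr '' Δ) (Sum.inl '' B) (Sum.inl '' W) ↔
      ∀ v ∈ Δ, Dgraph.DSep (G.editAug {v}) (Sum.inr '' {v})
        (Sum.inl '' B) (Sum.inl '' W) := by
  constructor
  · intro hΔ v hvΔ p hp hhead hlast
    have hhd : ∀ d, p.head? = some (Sum.inr d) → d = v := by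
      intro d hd
      obtain ⟨e, he, heq⟩ := hhead _ hd
      have h1 : e = d := Sum.inr.inj heq
      have h2 : e = v := he
      rw [← h1]; exact h2
    have hOk : ∀ x ∈ p, ∀ d, x = Sum.inr d → d = v :=
      ok_of_singleton_path hp.2.2 hhd
    have hvv : v ∈ ({v} : Set α) := rfl
    have hpΔ : (G.editAug Δ).IsPath p := path_transfer hvv hvΔ hOk hp
    have hheadΔ : ∀ a, p.head? = some a → a ∈ Sum.inr '' Δ := by
      intro a ha
      obtain ⟨e, he, heq⟩ := hhead a ha
      exact ⟨e, by rw [← he] at hvΔ; exact hvΔ, heq⟩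
    exact blocked_transfer hvΔ hvv hOk (hΔ p hpΔ hheadΔ hlast)
  · intro hsing p hp hhead hlast
    have hne : p ≠ [] := hp.1
    -- head is some inr v with v ∈ Δ
    obtain ⟨a, hha⟩ : ∃ a, p.head? = some a := by
      cases p with
      | nil => exact absurd rfl hne
      | cons x t => exact ⟨x, rfl⟩
    obtain ⟨v, hvΔ, hav⟩ := hhead a hha
    -- last is inl
    obtain ⟨b, hb⟩ : ∃ b, p.getLast? = some b := by
      cases p with
      | nil => exact absurd rfl hne
      | cons x t => exact ⟨(x :: t).getLast (by simp), List.getLast?_eq_getLast _⟩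
    obtain ⟨y₀, _, hby⟩ := hlast b hb
    have hlast_not_inr : ∀ d : α, p.getLast? ≠ some (Sum.inr d) := by
      intro d hd
      rw [hb] at hd
      rw [← hby] at hd
      exact absurd (Option.some.inj hd) (by simp)
    have hOk : ∀ x ∈ p, ∀ d, x = Sum.inr d → d = v := by
      cases p with
      | nil => intro x hx; simp at hx
      | cons z t =>
        intro x hx d hxd
        rcases List.mem_cons.mp hx with rfl | hx
        · have hz : x = a := Option.some.inj hha
          rw [hz, ← hav] at hxd
          exact (Sum.inr.inj hxd).symm
        · exact absurd hxd
            (tail_not_inr _ hp.2.2 hp.2.1 hlast_not_inr x (by simpa using hx) d)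
    have hvv : v ∈ ({v} : Set α) := rfl
    have hpv : (G.editAug {v}).IsPath p := path_transfer hvΔ hvv hOk hp
    have hheadv : ∀ c, p.head? = some c → c ∈ Sum.inr '' ({v} : Set α) := by
      intro c hc
      have hca : a = c := Option.some.inj (hha.symm.trans hc)
      exact ⟨v, rfl, by rw [← hca, ← hav]⟩
    exact blocked_transfer hvv hvΔ hOk (hsing v hvΔ p hpv hheadv hlast)

private lemma editableG_iff_singletons {H : ℕ} (G : Dgraph α) (act : Fin H → α)
    (inp : Fin H → Set α) (rew : Set α) (Xj : Set (Fin H)) (Δ : Set α) :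
    Dgraph.EditableG G act inp rew Xj Δ ↔
      ∀ v ∈ Δ, Dgraph.EditableG G act inp rew Xj {v} := by
  unfold Dgraph.EditableG
  constructor
  · intro h v hv i hi
    exact (dsep_iff_singletons G Δ _ _).mp (h i hi) v hv
  · intro h i hi
    exact (dsep_iff_singletons G Δ _ _).mpr (fun v hv => h v hv i hi)

end FindMaxEditAux

/-- **Correctness of FindMaxEdit.**
`Δ* = {V ∈ V \ (X ∪ Y) : {V} is editable w.r.t. Xj}` is itself editable w.r.t.
`Xj`; a set `Δ ⊆ V \ (X ∪ Y)` is editable w.r.t. `Xj` iff `Δ ⊆ Δ*`; no editable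
set strictly contains `Δ*`; and any maximal editable set equals `Δ*`. -/
theorem findMaxEdit_correct
    {α : Type} [Fintype α] {H : ℕ} (G : Dgraph α)
    (hacyc : ∀ a, ¬ Relation.TransGen G.Edge a a)
    (act : Fin H → α) (hinj : Function.Injective act)
    (inp : Fin H → Set α) (rew : Set α) (Xj : Set (Fin H)) :
    Dgraph.EditableG G act inp rew Xj (maxEditG G act inp rew Xj) ∧
    (∀ Δ : Set α, Δ ∩ (Set.range act ∪ rew) = ∅ →
      (Dgraph.EditableG G act inp rew Xj Δ ↔ Δ ⊆ maxEditG G act inp rew Xj)) ∧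
    (∀ Δ : Set α, Δ ∩ (Set.range act ∪ rew) = ∅ →
      Dgraph.EditableG G act inp rew Xj Δ → ¬ maxEditG G act inp rew Xj ⊂ Δ) ∧
    (∀ Δ : Set α, Δ ∩ (Set.range act ∪ rew) = ∅ →
      Dgraph.EditableG G act inp rew Xj Δ →
      (∀ Δ' : Set α, Δ' ∩ (Set.range act ∪ rew) = ∅ →
        Dgraph.EditableG G act inp rew Xj Δ' → ¬ Δ ⊂ Δ') →
      Δ = maxEditG G act inp rew Xj) := by
  have hiff : ∀ Δ : Set α, Δ ∩ (Set.range act ∪ rew) = ∅ →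
      (Dgraph.EditableG G act inp rew Xj Δ ↔ Δ ⊆ maxEditG G act inp rew Xj) := by
    intro Δ hdisj
    constructor
    · intro hed v hv
      have hnot : v ∉ Set.range act ∪ rew := by
        intro hmem
        have : v ∈ Δ ∩ (Set.range act ∪ rew) := ⟨hv, hmem⟩
        rw [hdisj] at this
        exact this
      exact ⟨fun h => hnot (Or.inl h), fun h => hnot (Or.inr h),
        (editableG_iff_singletons G act inp rew Xj Δ).mp hed v hv⟩
    · intro hsub
      exact (editableG_iff_singletons G act inp rew Xj Δ).mpr
        (fun v hv => (hsub hv).2.2)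
  have hmaxdisj : maxEditG G act inp rew Xj ∩ (Set.range act ∪ rew) = ∅ := by
    ext v
    simp only [Set.mem_inter_iff, Set.mem_empty_iff_false, iff_false, not_and]
    rintro ⟨hv1, hv2, _⟩ (h | h)
    · exact hv1 h
    · exact hv2 h
  have hmaxed : Dgraph.EditableG G act inp rew Xj (maxEditG G act inp rew Xj) :=
    (editableG_iff_singletons G act inp rew Xj _).mpr (fun v hv => hv.2.2)
  refine ⟨hmaxed, hiff, ?_, ?_⟩
  · intro Δ hdisj hed hss
    exact hss.2 ((hiff Δ hdisj).mp hed)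
  · intro Δ hdisj hed hmax
    have hsub : Δ ⊆ maxEditG G act inp rew Xj := (hiff Δ hdisj).mp hed
    by_contra hne
    exact hmax (maxEditG G act inp rew Xj) hmaxdisj hmaxed ⟨hsub, fun h => hne
      (Set.Subset.antisymm hsub h)⟩
end
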